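/- arXiv:2302.03010 — 2 statements merged into one kernel-verified Lean document; each statement's English description precedes it below -/
import Mathlib

section
/- Let (X_i)_{i∈I} and (Y_i)_{i∈I} be independent integrable random vectors indexed by a finite set I with E[X_i] = E[Y_i] = 0 for all i. Define S_ℓ(Z) as the maximum over subsets J ⊆ I with |J| = ℓ of ∑_{i∈J} Z_i. Then E[S_ℓ(X)] ≤ E[S_ℓ(X + Y)] for every 1 ≤ ℓ ≤ |I|. -/
open MeasureTheory ProbabilityTheory

private lemma aemeasurable_pi_of_coords {Ω ι : Type*} [MeasurableSpace Ω] [Countable ι]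
    {P : Measure Ω} {f : ι → Ω → ℝ} (h : ∀ i, AEMeasurable (f i) P) :
    AEMeasurable (fun ω i => f i ω) P := by
  choose g hg hge using h
  refine ⟨fun ω i => g i ω, measurable_pi_lambda _ hg, ?_⟩
  filter_upwards [MeasureTheory.ae_all_iff.2 hge] with ω hω
  funext i; exact hω i

private lemma integrable_sup'_of_forall {α κ : Type*} [MeasurableSpace α] {μ : Measure α}
    {s : Finset κ} (hs : s.Nonempty) {f : κ → α → ℝ}
    (hf : ∀ j ∈ s, Integrable (f j) μ) :
    Integrable (fun a => s.sup' hs fun j => f j a) μ := by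
  have : (fun a => s.sup' hs fun j => f j a) = s.sup' hs f := by
    funext a; rw [Finset.sup'_apply]
  rw [this]
  exact Finset.sup'_induction (p := fun g => Integrable g μ) hs f
    (fun p hp q hq => hp.sup hq) hf

/-- Let `(X_i)` and `(Y_i)` be independent integrable centered random vectors indexed by a
finite set `ι`, and let `S_ℓ(Z) = max {∑_{i∈J} Z_i : J ⊆ ι, |J| = ℓ}`.  Then
`E[S_ℓ(X)] ≤ E[S_ℓ(X+Y)]` for every `1 ≤ ℓ ≤ |ι|`. -/
theorem integral_sumMax_le_of_indep_centered {Ω : Type*} [MeasurableSpace Ω]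
    (P : Measure Ω) [IsProbabilityMeasure P] {ι : Type*} [Fintype ι]
    (X Y : ι → Ω → ℝ)
    (hXint : ∀ i, Integrable (X i) P) (hYint : ∀ i, Integrable (Y i) P)
    (hX0 : ∀ i, ∫ ω, X i ω ∂P = 0) (hY0 : ∀ i, ∫ ω, Y i ω ∂P = 0)
    (hindep : IndepFun (fun ω i => X i ω) (fun ω i => Y i ω) P)
    (ℓ : ℕ) (hℓ1 : 1 ≤ ℓ) (hℓ : ℓ ≤ Fintype.card ι) :
    ∫ ω, sSup {s : ℝ | ∃ J : Finset ι, J.card = ℓ ∧ s = ∑ i ∈ J, X i ω} ∂P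
      ≤ ∫ ω, sSup {s : ℝ | ∃ J : Finset ι, J.card = ℓ ∧ s = ∑ i ∈ J, (X i ω + Y i ω)} ∂P := by
  classical
  set 𝒥 : Finset (Finset ι) := Finset.univ.powersetCard ℓ with h𝒥def
  have h𝒥 : 𝒥.Nonempty := Finset.powersetCard_nonempty.2 (by simpa using hℓ)
  set S : (ι → ℝ) → ℝ := fun z => 𝒥.sup' h𝒥 fun J => ∑ i ∈ J, z i with hSdef
  have hSet : ∀ z : ι → ℝ,
      sSup {s : ℝ | ∃ J : Finset ι, J.card = ℓ ∧ s = ∑ i ∈ J, z i} = S z := by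
    intro z
    have him : {s : ℝ | ∃ J : Finset ι, J.card = ℓ ∧ s = ∑ i ∈ J, z i}
        = (fun J : Finset ι => ∑ i ∈ J, z i) '' ↑𝒥 := by
      ext s
      simp only [Set.mem_setOf_eq, Set.mem_image, Finset.mem_coe, h𝒥def,
        Finset.mem_powersetCard, Finset.subset_univ, true_and]
      constructor
      · rintro ⟨J, hJ, rfl⟩; exact ⟨J, hJ, rfl⟩
      · rintro ⟨J, hJ, rfl⟩; exact ⟨J, hJ, rfl⟩
    rw [him, ← Finset.sup'_eq_csSup_image 𝒥 h𝒥]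
  -- measures
  set fX : Ω → ι → ℝ := fun ω i => X i ω with hfXdef
  set fY : Ω → ι → ℝ := fun ω i => Y i ω with hfYdef
  have hfX : AEMeasurable fX P :=
    aemeasurable_pi_of_coords fun i => (hXint i).aemeasurable
  have hfY : AEMeasurable fY P :=
    aemeasurable_pi_of_coords fun i => (hYint i).aemeasurable
  set μX : Measure (ι → ℝ) := P.map fX with hμXdef
  set μY : Measure (ι → ℝ) := P.map fY with hμYdef
  haveI : IsProbabilityMeasure μX := Measure.isProbabilityMeasure_map hfX
  haveI : IsProbabilityMeasure μY := Measure.isProbabilityMeasure_map hfY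
  have hmap : P.map (fun ω => (fX ω, fY ω)) = μX.prod μY :=
    (indepFun_iff_map_prod_eq_prod_map_map hfX hfY).1 hindep
  -- measurability of S
  have hSm : Measurable S := by
    have : S = 𝒥.sup' h𝒥 (fun J z => ∑ i ∈ J, z i) := by
      funext z; rw [Finset.sup'_apply]
    rw [this]
    exact Finset.measurable_sup' h𝒥 fun J _ =>
      Finset.measurable_sum _ fun i _ => measurable_pi_apply i
  -- integrability of coordinates
  have hXi : ∀ i, Integrable (fun x : ι → ℝ => x i) μX := fun i =>
    (integrable_map_measure (measurable_pi_apply i).aestronglyMeasurable hfX).2 (hXint i)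
  have hYi : ∀ i, Integrable (fun y : ι → ℝ => y i) μY := fun i =>
    (integrable_map_measure (measurable_pi_apply i).aestronglyMeasurable hfY).2 (hYint i)
  have hY0' : ∀ i, ∫ y, y i ∂μY = 0 := fun i => by
    rw [hμYdef, integral_map hfY (measurable_pi_apply i).aestronglyMeasurable]
    exact hY0 i
  -- integrability on the product
  have hfst : ∀ (g : (ι → ℝ) → ℝ), Integrable g μX →
      Integrable (fun p : (ι → ℝ) × (ι → ℝ) => g p.1) (μX.prod μY) := by
    intro g hg
    have h1 : (μX.prod μY).map Prod.fst = μX := by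
      rw [Measure.map_fst_prod]; simp
    rw [← h1] at hg
    exact (integrable_map_measure hg.aestronglyMeasurable measurable_fst.aemeasurable).1 hg
  have hsnd : ∀ (g : (ι → ℝ) → ℝ), Integrable g μY →
      Integrable (fun p : (ι → ℝ) × (ι → ℝ) => g p.2) (μX.prod μY) := by
    intro g hg
    have h1 : (μX.prod μY).map Prod.snd = μY := by
      rw [Measure.map_snd_prod]; simp
    rw [← h1] at hg
    exact (integrable_map_measure hg.aestronglyMeasurable measurable_snd.aemeasurable).1 hg
  have hint_term : ∀ J ∈ 𝒥,
      Integrable (fun p : (ι → ℝ) × (ι → ℝ) => ∑ i ∈ J, (p.1 i + p.2 i)) (μX.prod μY) := by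
    intro J _
    have h1 : Integrable (fun p : (ι → ℝ) × (ι → ℝ) => ∑ i ∈ J, p.1 i) (μX.prod μY) :=
      hfst _ (integrable_finset_sum _ fun i _ => hXi i)
    have h2 : Integrable (fun p : (ι → ℝ) × (ι → ℝ) => ∑ i ∈ J, p.2 i) (μX.prod μY) :=
      hsnd _ (integrable_finset_sum _ fun i _ => hYi i)
    simpa [Finset.sum_add_distrib, Pi.add_def] using h1.add h2
  have hintS : Integrable (fun p : (ι → ℝ) × (ι → ℝ) => S (p.1 + p.2)) (μX.prod μY) := by
    have : (fun p : (ι → ℝ) × (ι → ℝ) => S (p.1 + p.2))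
        = fun p : (ι → ℝ) × (ι → ℝ) =>
            𝒥.sup' h𝒥 fun J => ∑ i ∈ J, (p.1 i + p.2 i) := rfl
    rw [this]
    exact integrable_sup'_of_forall h𝒥 hint_term
  have hIntSX : Integrable S μX :=
    integrable_sup'_of_forall h𝒥 fun J _ => integrable_finset_sum _ fun i _ => hXi i
  -- rewrite both sides
  have eL : (∫ ω, sSup {s : ℝ | ∃ J : Finset ι, J.card = ℓ ∧ s = ∑ i ∈ J, X i ω} ∂P)
      = ∫ x, S x ∂μX := by
    rw [hμXdef, integral_map hfX hSm.aestronglyMeasurable]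
    exact integral_congr_ae (Filter.Eventually.of_forall fun ω => hSet (fX ω))
  have eR : (∫ ω, sSup {s : ℝ | ∃ J : Finset ι, J.card = ℓ ∧ s = ∑ i ∈ J, (X i ω + Y i ω)} ∂P)
      = ∫ x, ∫ y, S (x + y) ∂μY ∂μX := by
    have h1 : (∫ ω, sSup {s : ℝ | ∃ J : Finset ι, J.card = ℓ ∧ s = ∑ i ∈ J, (X i ω + Y i ω)} ∂P)
        = ∫ ω, S (fX ω + fY ω) ∂P :=
      integral_congr_ae (Filter.Eventually.of_forall fun ω => hSet (fX ω + fY ω))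
    have hm2 : Measurable fun p : (ι → ℝ) × (ι → ℝ) => S (p.1 + p.2) :=
      hSm.comp (measurable_fst.add measurable_snd)
    have h2 : (∫ ω, S (fX ω + fY ω) ∂P)
        = ∫ p : (ι → ℝ) × (ι → ℝ), S (p.1 + p.2) ∂(μX.prod μY) := by
      rw [← hmap, integral_map (hfX.prodMk hfY) hm2.aestronglyMeasurable]
    rw [h1, h2, integral_prod _ hintS]
  rw [eL, eR]
  -- pointwise comparison
  have hptwise : ∀ x : ι → ℝ, S x ≤ ∫ y, S (x + y) ∂μY := by
    intro x
    have hterm : ∀ i, Integrable (fun y : ι → ℝ => x i + y i) μY := fun i =>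
      (integrable_const (x i)).add (hYi i)
    refine Finset.sup'_le h𝒥 _ fun J hJ => ?_
    have h1 : ∑ i ∈ J, x i = ∫ y, ∑ i ∈ J, (x i + y i) ∂μY := by
      rw [integral_finset_sum _ fun i _ => hterm i]
      have : ∀ i ∈ J, (∫ y, (x i + y i) ∂μY) = x i := by
        intro i _
        rw [integral_add (integrable_const (x i)) (hYi i), hY0' i, integral_const]
        simp
      rw [Finset.sum_congr rfl this]
    rw [h1]
    refine integral_mono (integrable_finset_sum _ fun i _ => hterm i)
      ?_ fun y => ?_
    · have : (fun y : ι → ℝ => S (x + y))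
          = fun y : ι → ℝ => 𝒥.sup' h𝒥 fun J' => ∑ i ∈ J', (x i + y i) := rfl
      rw [this]
      refine integrable_sup'_of_forall h𝒥 fun J' _ =>
        integrable_finset_sum _ fun i _ => hterm i
    · exact Finset.le_sup' (fun J' => ∑ i ∈ J', (x i + y i)) hJ
  refine integral_mono hIntSX hintS.integral_prod_left hptwise
end

section
/- Suppose Z ∼ N(0,1) and W ∼ N(0,1) are independent. Set X = (Z, W) and Y = (Z, Z). Then the covariance matrix of X is dominated entrywise by that of Y (with equal variances), yet for every t > 0, P(Z + W > t) < P(2Z > t). Hence stochastic comparison of the sum of the two largest values fails even though Slepian-type covariance domination holds. -/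
open MeasureTheory ProbabilityTheory Real Set

-- pointwise convolution identity (real)
lemma conv_pdf_real (y : ℝ) :
    ∫ x : ℝ, gaussianPDFReal 0 1 x * gaussianPDFReal x 1 y = gaussianPDFReal 0 2 y := by
  have hπ : (0:ℝ) < π := pi_pos
  have h1 : ∀ x : ℝ, gaussianPDFReal 0 1 x * gaussianPDFReal x 1 y
      = (2*π)⁻¹ * rexp (-y^2/4) * rexp (-1 * (x - y/2)^2) := by
    intro x
    simp only [gaussianPDFReal]
    push_cast
    rw [mul_one, mul_one]
    have hs : (√(2*π))⁻¹ * (√(2*π))⁻¹ = (2*π)⁻¹ := by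
      rw [← mul_inv, Real.mul_self_sqrt (by positivity)]
    have he : rexp (-(x-0)^2/(2:ℝ)) * rexp (-(y-x)^2/(2:ℝ))
        = rexp (-y^2/4) * rexp (-1 * (x - y/2)^2) := by
      rw [← Real.exp_add, ← Real.exp_add]
      ring_nf
    calc (√(2*π))⁻¹ * rexp (-(x-0)^2/(2:ℝ)) * ((√(2*π))⁻¹ * rexp (-(y-x)^2/(2:ℝ)))
        = ((√(2*π))⁻¹ * (√(2*π))⁻¹) * (rexp (-(x-0)^2/(2:ℝ)) * rexp (-(y-x)^2/(2:ℝ))) := by ring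
      _ = (2*π)⁻¹ * (rexp (-y^2/4) * rexp (-1 * (x - y/2)^2)) := by rw [hs, he]
      _ = (2*π)⁻¹ * rexp (-y^2/4) * rexp (-1 * (x - y/2)^2) := by ring
  simp_rw [h1]
  rw [integral_const_mul, integral_sub_right_eq_self (fun a => rexp (-1 * a^2)) (y/2),
    integral_gaussian]
  simp only [gaussianPDFReal]
  push_cast
  have h4 : √(π/1) = √π := by norm_num
  rw [h4]
  have : √(2*π*2) = 2*√π := by
    rw [show (2:ℝ)*π*2 = 2^2*π by ring, Real.sqrt_mul (by positivity), Real.sqrt_sq (by norm_num)]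
  rw [this]
  have hsp : (0:ℝ) < √π := Real.sqrt_pos.mpr hπ
  have hss : √π * √π = π := Real.mul_self_sqrt hπ.le
  have hc : (2*π)⁻¹ * √π = (2*√π)⁻¹ := by
    field_simp
    nlinarith [hss]
  have harg : -(y-0)^2/(2*(2:ℝ)) = -y^2/4 := by ring
  rw [harg]
  linear_combination rexp (-y^2/4) * hc

lemma meas_joint2 : Measurable (fun p : ℝ × ℝ => gaussianPDF p.1 1 p.2) := by
  simp only [gaussianPDF, gaussianPDFReal]
  apply Measurable.ennreal_ofReal
  fun_prop

lemma meas_joint : Measurable (fun p : ℝ × ℝ => gaussianPDF 0 1 p.1 * gaussianPDF p.1 1 p.2) := by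
  apply Measurable.mul (f := fun p : ℝ × ℝ => gaussianPDF 0 1 p.1) (g := fun p : ℝ × ℝ => gaussianPDF p.1 1 p.2)
  · exact (measurable_gaussianPDF 0 1).comp measurable_fst
  · simp only [gaussianPDF, gaussianPDFReal]
    apply Measurable.ennreal_ofReal
    fun_prop

lemma integrable_conv (y : ℝ) :
    Integrable (fun x : ℝ => gaussianPDFReal 0 1 x * gaussianPDFReal x 1 y) := by
  have h1 : ∀ x : ℝ, gaussianPDFReal 0 1 x * gaussianPDFReal x 1 y
      = (2*π)⁻¹ * rexp (-y^2/4) * rexp (-1 * (x - y/2)^2) := by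
    intro x
    simp only [gaussianPDFReal]
    push_cast
    rw [mul_one, mul_one]
    have hs : (√(2*π))⁻¹ * (√(2*π))⁻¹ = (2*π)⁻¹ := by
      rw [← mul_inv, Real.mul_self_sqrt (by positivity)]
    have he : rexp (-(x-0)^2/(2:ℝ)) * rexp (-(y-x)^2/(2:ℝ))
        = rexp (-y^2/4) * rexp (-1 * (x - y/2)^2) := by
      rw [← Real.exp_add, ← Real.exp_add]; ring_nf
    calc (√(2*π))⁻¹ * rexp (-(x-0)^2/(2:ℝ)) * ((√(2*π))⁻¹ * rexp (-(y-x)^2/(2:ℝ)))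
        = ((√(2*π))⁻¹ * (√(2*π))⁻¹) * (rexp (-(x-0)^2/(2:ℝ)) * rexp (-(y-x)^2/(2:ℝ))) := by ring
      _ = (2*π)⁻¹ * (rexp (-y^2/4) * rexp (-1 * (x - y/2)^2)) := by rw [hs, he]
      _ = (2*π)⁻¹ * rexp (-y^2/4) * rexp (-1 * (x - y/2)^2) := by ring
  simp_rw [h1]
  exact ((integrable_exp_neg_mul_sq one_pos).comp_sub_right (y/2)).const_mul _

lemma conv_pdf_lintegral (y : ℝ) :
    ∫⁻ x : ℝ, gaussianPDF 0 1 x * gaussianPDF x 1 y = gaussianPDF 0 2 y := by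
  simp only [gaussianPDF]
  have : ∀ x : ℝ, ENNReal.ofReal (gaussianPDFReal 0 1 x) * ENNReal.ofReal (gaussianPDFReal x 1 y)
      = ENNReal.ofReal (gaussianPDFReal 0 1 x * gaussianPDFReal x 1 y) :=
    fun x => (ENNReal.ofReal_mul (gaussianPDFReal_nonneg _ _ _)).symm
  simp_rw [this]
  rw [← ofReal_integral_eq_lintegral_ofReal (integrable_conv y)
    (Filter.Eventually.of_forall fun x =>
      mul_nonneg (gaussianPDFReal_nonneg _ _ _) (gaussianPDFReal_nonneg _ _ _)),
    conv_pdf_real]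

lemma map_add_gauss :
    Measure.map (fun p : ℝ × ℝ => p.1 + p.2) ((gaussianReal 0 1).prod (gaussianReal 0 1))
      = gaussianReal 0 2 := by
  ext s hs
  rw [Measure.map_apply (f := fun p : ℝ × ℝ => p.1 + p.2) (measurable_fst.add measurable_snd) hs,
    Measure.prod_apply (s := (fun p : ℝ × ℝ => p.1 + p.2) ⁻¹' s) (measurable_fst.add measurable_snd hs)]
  have hfib : ∀ x : ℝ, (Prod.mk x ⁻¹' ((fun p : ℝ × ℝ => p.1 + p.2) ⁻¹' s))
      = (fun y => x + y) ⁻¹' s := fun x => rfl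
  have hmap : ∀ x : ℝ, gaussianReal 0 1 ((fun y => x + y) ⁻¹' s)
      = ∫⁻ y in s, gaussianPDF x 1 y := by
    intro x
    rw [← Measure.map_apply (measurable_const_add x) hs, gaussianReal_map_const_add,
      zero_add, gaussianReal_apply _ one_ne_zero]
  simp_rw [hfib, hmap]
  have hmeas : Measurable (fun x : ℝ => ∫⁻ y in s, gaussianPDF x 1 y) :=
    Measurable.lintegral_prod_right' (f := fun p : ℝ × ℝ => gaussianPDF p.1 1 p.2) meas_joint2
  rw [gaussianReal_of_var_ne_zero _ one_ne_zero,
    lintegral_withDensity_eq_lintegral_mul _ (measurable_gaussianPDF 0 1) hmeas]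
  simp only [Pi.mul_apply]
  have hmul : ∀ x : ℝ, gaussianPDF 0 1 x * ∫⁻ y in s, gaussianPDF x 1 y
      = ∫⁻ y in s, gaussianPDF 0 1 x * gaussianPDF x 1 y := fun x =>
    (lintegral_const_mul _ (meas_joint2.comp (measurable_const.prodMk measurable_id))).symm
  simp_rw [hmul]
  rw [lintegral_lintegral_swap (meas_joint.aemeasurable)]
  simp_rw [conv_pdf_lintegral]
  rw [gaussianReal_apply _ (by norm_num : (2:NNReal) ≠ 0)]

lemma gauss_tail_strict {a b : ℝ} (hab : a < b) :
    gaussianReal 0 1 (Set.Ioi b) < gaussianReal 0 1 (Set.Ioi a) := by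
  have hU : Set.Ioc a b ∪ Set.Ioi b = Set.Ioi a := Set.Ioc_union_Ioi_eq_Ioi hab.le
  have hpos : gaussianReal 0 1 (Set.Ioc a b) ≠ 0 := by
    intro h
    have h2 := (gaussianReal_absolutelyContinuous' 0 one_ne_zero) h
    rw [Real.volume_Ioc, ENNReal.ofReal_eq_zero] at h2
    linarith
  calc gaussianReal 0 1 (Set.Ioi b)
      < gaussianReal 0 1 (Set.Ioi b) + gaussianReal 0 1 (Set.Ioc a b) :=
        ENNReal.lt_add_right (measure_ne_top _ _) hpos
    _ = gaussianReal 0 1 (Set.Ioi a) := by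
        rw [← hU, measure_union (Set.Ioc_disjoint_Ioi le_rfl) measurableSet_Ioi, add_comm]

lemma nnreal_sq_sqrt2 : (⟨(Real.sqrt 2)^2, sq_nonneg _⟩ : NNReal) * 1 = 2 := by
  ext
  simp [Real.sq_sqrt (by norm_num : (0:ℝ) ≤ 2)]
  rfl

lemma map_sqrt2 :
    Measure.map (fun x : ℝ => Real.sqrt 2 * x) (gaussianReal 0 1) = gaussianReal 0 2 := by
  rw [gaussianReal_map_const_mul, mul_zero]; exact congrArg _ nnreal_sq_sqrt2

lemma nnreal_sq_two : (⟨(2:ℝ)^2, sq_nonneg _⟩ : NNReal) * 1 = 4 := by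
  ext; norm_num
  rfl

lemma map_two :
    Measure.map (fun x : ℝ => (2:ℝ) * x) (gaussianReal 0 1) = gaussianReal 0 4 := by
  rw [gaussianReal_map_const_mul, mul_zero]; exact congrArg _ nnreal_sq_two

lemma nnreal_sq_neg_one : (⟨(-1:ℝ)^2, sq_nonneg _⟩ : NNReal) * 1 = 1 := by
  ext; norm_num

lemma map_neg_one :
    Measure.map (fun x : ℝ => (-1:ℝ) * x) (gaussianReal 0 1) = gaussianReal 0 1 := by
  rw [gaussianReal_map_const_mul, mul_zero]; exact congrArg _ nnreal_sq_neg_one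

lemma gauss_mean_zero : ∫ x : ℝ, x ∂(gaussianReal 0 1) = 0 := by
  have h := integral_map (μ := gaussianReal 0 1) (φ := fun x : ℝ => (-1:ℝ) * x)
    (measurable_const_mul (-1:ℝ)).aemeasurable
    (f := fun x : ℝ => x) (by rw [map_neg_one]; exact aestronglyMeasurable_id)
  rw [map_neg_one] at h
  simp only [neg_one_mul] at h
  rw [integral_neg] at h
  linarith

/-- If `Z, W` are independent standard Gaussians, `X = (Z, W)` and `Y = (Z, Z)`, then the
covariance matrix of `X` is dominated entrywise by that of `Y` (with equal variances), yet
`P(Z + W > t) < P(2Z > t)` for every `t > 0`: stochastic comparison of `S₂` fails. -/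
theorem slepian_fails_for_sum_of_two_largest {Ω : Type*} [MeasurableSpace Ω] (P : Measure Ω)
    [IsProbabilityMeasure P] (Z W : Ω → ℝ) (hZ : Measurable Z) (hW : Measurable W)
    (hZl : Measure.map Z P = gaussianReal 0 1) (hWl : Measure.map W P = gaussianReal 0 1)
    (hind : IndepFun Z W P) :
    (∫ ω, W ω * W ω ∂P = ∫ ω, Z ω * Z ω ∂P) ∧
    (∫ ω, Z ω * W ω ∂P ≤ ∫ ω, Z ω * Z ω ∂P) ∧
    (∀ t : ℝ, 0 < t → P {ω | t < Z ω + W ω} < P {ω | t < 2 * Z ω}) := by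
  have hmm : AEStronglyMeasurable (fun x : ℝ => x * x) (gaussianReal 0 1) :=
    (measurable_id.mul measurable_id).aestronglyMeasurable
  have hZZ : ∫ ω, Z ω * Z ω ∂P = ∫ x : ℝ, x * x ∂(gaussianReal 0 1) := by
    rw [← hZl]
    exact (integral_map hZ.aemeasurable (by rw [hZl]; exact hmm)).symm
  have hWW : ∫ ω, W ω * W ω ∂P = ∫ x : ℝ, x * x ∂(gaussianReal 0 1) := by
    rw [← hWl]
    exact (integral_map hW.aemeasurable (by rw [hWl]; exact hmm)).symm
  refine ⟨hWW.trans hZZ.symm, ?_, ?_⟩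
  · have hZ0 : ∫ ω, Z ω ∂P = 0 := by
      rw [← gauss_mean_zero, ← hZl]
      exact (integral_map hZ.aemeasurable (f := fun x : ℝ => x)
        (by rw [hZl]; exact aestronglyMeasurable_id)).symm
    have hmul : ∫ ω, Z ω * W ω ∂P = (∫ ω, Z ω ∂P) * ∫ ω, W ω ∂P :=
      hind.integral_mul_eq_mul_integral hZ.aestronglyMeasurable hW.aestronglyMeasurable
    rw [hmul, hZ0, zero_mul]
    exact integral_nonneg fun ω => mul_self_nonneg _
  · intro t ht
    have hprod : Measure.map (fun ω => (Z ω, W ω)) P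
        = (gaussianReal 0 1).prod (gaussianReal 0 1) := by
      have h := (indepFun_iff_map_prod_eq_prod_map_map hZ.aemeasurable hW.aemeasurable).mp hind
      rw [hZl, hWl] at h
      exact h
    have hsum_map : Measure.map (fun ω => Z ω + W ω) P = gaussianReal 0 2 := by
      rw [show (fun ω => Z ω + W ω)
            = (fun p : ℝ × ℝ => p.1 + p.2) ∘ (fun ω => (Z ω, W ω)) from rfl,
        ← Measure.map_map (g := fun p : ℝ × ℝ => p.1 + p.2) (measurable_fst.add measurable_snd) (hZ.prodMk hW), hprod,
        map_add_gauss]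
    have h2Z_map : Measure.map (fun ω => 2 * Z ω) P = gaussianReal 0 4 := by
      rw [show (fun ω => 2 * Z ω) = (fun x : ℝ => (2:ℝ) * x) ∘ Z from rfl,
        ← Measure.map_map (measurable_const_mul 2) hZ, hZl, map_two]
    have hPsum : P {ω | t < Z ω + W ω} = gaussianReal 0 2 (Set.Ioi t) := by
      rw [show {ω | t < Z ω + W ω} = (fun ω => Z ω + W ω) ⁻¹' Set.Ioi t from rfl,
        ← Measure.map_apply (f := fun ω => Z ω + W ω) (hZ.add hW) measurableSet_Ioi, hsum_map]
    have hP2Z : P {ω | t < 2 * Z ω} = gaussianReal 0 4 (Set.Ioi t) := by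
      rw [show {ω | t < 2 * Z ω} = (fun ω => 2 * Z ω) ⁻¹' Set.Ioi t from rfl,
        ← Measure.map_apply (hZ.const_mul 2) measurableSet_Ioi, h2Z_map]
    have hs2 : (0:ℝ) < Real.sqrt 2 := Real.sqrt_pos.mpr two_pos
    have e2 : gaussianReal 0 2 (Set.Ioi t) = gaussianReal 0 1 (Set.Ioi (t / Real.sqrt 2)) := by
      rw [← map_sqrt2, Measure.map_apply (measurable_const_mul _) measurableSet_Ioi]
      congr 1
      ext x
      simp only [Set.mem_preimage, Set.mem_Ioi]
      rw [div_lt_iff₀ hs2, mul_comm]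
    have e4 : gaussianReal 0 4 (Set.Ioi t) = gaussianReal 0 1 (Set.Ioi (t / 2)) := by
      rw [← map_two, Measure.map_apply (measurable_const_mul _) measurableSet_Ioi]
      congr 1
      ext x
      simp only [Set.mem_preimage, Set.mem_Ioi]
      rw [div_lt_iff₀ two_pos, mul_comm]
    have hlt : Real.sqrt 2 < 2 := by
      nlinarith [Real.sq_sqrt (by norm_num : (0:ℝ) ≤ 2), Real.sqrt_nonneg 2]
    rw [hPsum, hP2Z, e2, e4]
    exact gauss_tail_strict (div_lt_div_of_pos_left ht hs2 hlt)
end
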